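/- arXiv:2312.11000 — 2 statements merged into one kernel-verified Lean document; each statement's English description precedes it below -/
import Mathlib

section
/- Let A be a real 3×3 invertible matrix such that A⁻¹ has all entries strictly positive and 0 < det A < 1. Then A has a real eigenvalue λ with 0 < λ < 1. Moreover λ can be taken to be the eigenvalue of smallest modulus of A (equivalently, the reciprocal of the Perron root of A⁻¹). -/
/-!
Perron's argument for the positive matrix `B = A⁻¹`: let `μ₀` be an eigenvalue of `B` of maximal
modulus `ρ` with eigenvector `v`. The triangle inequality gives `B |v| ≥ ρ |v|` entrywise. If this
were not an equality, positivity of `B` would give a positive vector `w` with `B w ≥ t w` for some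
`t > ρ`, so `‖Bᵏ‖` grows at least like `tᵏ`, contradicting Gelfand's formula. Hence `ρ` is a real
eigenvalue of `B`, and `λ = ρ⁻¹` is an eigenvalue of `A` of smallest modulus. Since `det A` is the
product of the three eigenvalues of `A`, `λ³ ≤ |det A| < 1`.
-/

open Filter Topology Matrix
open scoped ENNReal NNReal

theorem spectrum.ofReal_le_spectralRadius_of_le_norm_pow {A : Type*} [NormedRing A]
    [NormedAlgebra ℂ A] [CompleteSpace A] (a : A) {c t : ℝ} (hc : 0 < c) (ht : 0 ≤ t)
    (h : ∀ n : ℕ, c * t ^ n ≤ ‖a ^ n‖) : ENNReal.ofReal t ≤ spectralRadius ℂ a := by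
  have hroot : Tendsto (fun n : ℕ => c ^ (1 / (n : ℝ)) * t) atTop (𝓝 t) := by
    have h0 : Tendsto (fun n : ℕ => 1 / (n : ℝ)) atTop (𝓝 0) := tendsto_one_div_atTop_nhds_zero_nat
    simpa using ((Real.continuousAt_const_rpow hc.ne').tendsto.comp h0).mul_const t
  refine le_of_tendsto_of_tendsto (ENNReal.tendsto_ofReal hroot)
    (spectrum.pow_norm_pow_one_div_tendsto_nhds_spectralRadius a) ?_
  filter_upwards [eventually_ne_atTop 0] with n hn
  refine ENNReal.ofReal_le_ofReal ?_
  calc c ^ (1 / (n : ℝ)) * t = (c * t ^ n) ^ (1 / (n : ℝ)) := by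
        rw [Real.mul_rpow hc.le (by positivity), ← Real.rpow_natCast, ← Real.rpow_mul ht,
          mul_one_div_cancel (by exact_mod_cast hn), Real.rpow_one]
    _ ≤ ‖a ^ n‖ ^ (1 / (n : ℝ)) := by gcongr; exact h n

theorem exists_gt_smul_le_of_forall_lt {ι : Type*} [Finite ι] {w x : ι → ℝ} {ρ : ℝ}
    (h : ∀ i, ρ * w i < x i) : ∃ t > ρ, t • w ≤ x := by
  have : ∀ᶠ t in 𝓝 ρ, ∀ i, t * w i < x i := eventually_all.2 fun i =>
    (continuous_id.mul continuous_const).continuousAt.eventually_lt continuousAt_const (h i)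
  obtain ⟨t, hρt, ht⟩ := this.exists_gt
  exact ⟨t, hρt, fun i => (ht i).le⟩

namespace Matrix

variable {n : Type*} [Fintype n]

theorem map_nonsing_inv [DecidableEq n] {R S : Type*} [CommRing R] [CommRing S] (f : R →+* S)
    {A : Matrix n n R} (hA : IsUnit A.det) : A⁻¹.map f = (A.map f)⁻¹ := by
  refine (inv_eq_left_inv ?_).symm
  rw [← RingHom.mapMatrix_apply, ← RingHom.mapMatrix_apply, ← map_mul, nonsing_inv_mul _ hA,
    map_one]

theorem mem_spectrum_iff_det_sub_smul_eq_zero [DecidableEq n] {K : Type*} [Field K]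
    (M : Matrix n n K) (r : K) : r ∈ spectrum K M ↔ (M - r • 1).det = 0 := by
  rw [spectrum.mem_iff, isUnit_iff_isUnit_det, isUnit_iff_ne_zero, not_not,
    Algebra.algebraMap_eq_smul_one, ← neg_sub, det_neg, mul_eq_zero, or_iff_right]
  exact pow_ne_zero _ (neg_ne_zero.2 one_ne_zero)

theorem mem_spectrum_iff_exists_mulVec_eq_smul [DecidableEq n] {K : Type*} [Field K]
    (M : Matrix n n K) (r : K) : r ∈ spectrum K M ↔ ∃ v ≠ 0, M *ᵥ v = r • v := by
  simp only [mem_spectrum_iff_det_sub_smul_eq_zero, ← exists_mulVec_eq_zero_iff, sub_mulVec,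
    smul_mulVec, one_mulVec, sub_eq_zero]

theorem inv_mem_spectrum_iff [DecidableEq n] {K : Type*} [Field K] {A : Matrix n n K}
    (hA : IsUnit A) {r : K} : r⁻¹ ∈ spectrum K A ↔ r ∈ spectrum K A⁻¹ := by
  have h := spectrum.inv₀_mem_iff (R := K) (r := r) (a := hA.unit)
  rwa [coe_units_inv, IsUnit.unit_spec] at h

theorem pow_card_le_norm_det [DecidableEq n] {K : Type*} [NormedField K] [IsAlgClosed K]
    (M : Matrix n n K) {r : ℝ} (hr : 0 ≤ r) (h : ∀ μ ∈ spectrum K M, r ≤ ‖μ‖) :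
    r ^ Fintype.card n ≤ ‖M.det‖ := by
  lift r to ℝ≥0 using hr
  have hroots : ∀ μ ∈ M.charpoly.roots.map (‖·‖₊), r ≤ μ := by
    simp only [Multiset.mem_map, Polynomial.mem_roots M.charpoly_monic.ne_zero]
    rintro _ ⟨μ, hμ, rfl⟩
    exact_mod_cast h μ (mem_spectrum_iff_isRoot_charpoly.2 hμ)
  have hcard : (M.charpoly.roots.map (‖·‖₊)).card = Fintype.card n := by
    rw [Multiset.card_map, ← (IsAlgClosed.splits M.charpoly).natDegree_eq_card_roots,
      charpoly_natDegree_eq_dim]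
  rw [← coe_nnnorm, det_eq_prod_roots_charpoly, ← hcard]
  exact_mod_cast (Multiset.pow_card_le_prod hroots).trans_eq
    (map_multiset_prod (nnnormHom (α := K)) _).symm

theorem inv_le_norm_of_mem_spectrum [DecidableEq n] {K : Type*} [NormedField K]
    {A : Matrix n n K} (hA : IsUnit A) {ρ : ℝ} (h : ∀ μ ∈ spectrum K A⁻¹, ‖μ‖ ≤ ρ) {μ : K}
    (hμ : μ ∈ spectrum K A) : ρ⁻¹ ≤ ‖μ‖ := by
  have hμ0 : μ ≠ 0 := fun h0 => (spectrum.zero_notMem_iff K).2 hA (h0 ▸ hμ)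
  rw [← inv_inv μ, inv_mem_spectrum_iff hA] at hμ
  exact inv_le_of_inv_le₀ (norm_pos_iff.2 hμ0) (norm_inv μ ▸ h _ hμ)

theorem mulVec_mono_of_nonneg {B : Matrix n n ℝ} (hB : ∀ i j, 0 ≤ B i j) :
    Monotone (B *ᵥ ·) := fun _ _ hxy i =>
  Finset.sum_le_sum fun j _ => mul_le_mul_of_nonneg_left (hxy j) (hB i j)

theorem mulVec_apply_pos {B : Matrix n n ℝ} (hB : ∀ i j, 0 < B i j) {u : n → ℝ} (hu : 0 ≤ u)
    (hu0 : u ≠ 0) (i : n) : 0 < (B *ᵥ u) i := by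
  obtain ⟨j, hj⟩ := Function.ne_iff.1 hu0
  exact Finset.sum_pos' (fun k _ => mul_nonneg (hB i k).le (hu k))
    ⟨j, Finset.mem_univ j, mul_pos (hB i j) ((hu j).lt_of_ne' hj)⟩

theorem pow_smul_le_pow_mulVec [DecidableEq n] {B : Matrix n n ℝ} (hB : ∀ i j, 0 ≤ B i j)
    {w : n → ℝ} {t : ℝ} (ht : 0 ≤ t) (h : t • w ≤ B *ᵥ w) (k : ℕ) :
    t ^ k • w ≤ (B ^ k) *ᵥ w := by
  induction k with
  | zero => simp
  | succ k ih =>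
    calc t ^ (k + 1) • w = t ^ k • (t • w) := by rw [pow_succ, mul_smul]
      _ ≤ t ^ k • (B *ᵥ w) := smul_le_smul_of_nonneg_left h (pow_nonneg ht k)
      _ = B *ᵥ (t ^ k • w) := (mulVec_smul _ _ _).symm
      _ ≤ B *ᵥ ((B ^ k) *ᵥ w) := mulVec_mono_of_nonneg hB ih
      _ = (B ^ (k + 1)) *ᵥ w := by rw [mulVec_mulVec, pow_succ']

theorem norm_smul_le_mulVec_norm {B : Matrix n n ℝ} (hB : ∀ i j, 0 ≤ B i j) {μ : ℂ} {v : n → ℂ}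
    (hv : B.map Complex.ofReal *ᵥ v = μ • v) : ‖μ‖ • (‖v ·‖) ≤ B *ᵥ (‖v ·‖) := fun i =>
  calc ‖μ‖ * ‖v i‖ = ‖(B.map Complex.ofReal *ᵥ v) i‖ := by
        rw [hv, Pi.smul_apply, smul_eq_mul, norm_mul]
    _ ≤ ∑ j, ‖(B i j : ℂ) * v j‖ := norm_sum_le _ _
    _ = (B *ᵥ (‖v ·‖)) i := by
      simp only [norm_mul, Complex.norm_real, Real.norm_of_nonneg (hB i _)]; rfl

attribute [local instance] Matrix.linftyOpNormedRing Matrix.linftyOpNormedAlgebra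

theorem ofReal_le_spectralRadius_of_smul_le_mulVec [DecidableEq n] {B : Matrix n n ℝ}
    (hB : ∀ i j, 0 ≤ B i j) {w : n → ℝ} (hw : 0 ≤ w) (hw0 : w ≠ 0) {t : ℝ} (ht : 0 ≤ t)
    (h : t • w ≤ B *ᵥ w) : ENNReal.ofReal t ≤ spectralRadius ℂ (B.map Complex.ofReal) := by
  have : CompleteSpace (Matrix n n ℂ) := FiniteDimensional.complete ℂ _
  obtain ⟨i, hi⟩ := Function.ne_iff.1 hw0
  replace hi : 0 < w i := (hw i).lt_of_ne' hi
  set wℂ : n → ℂ := (↑) ∘ w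
  have hwℂ : 0 < ‖wℂ‖ :=
    (norm_pos_iff.2 (Complex.ofReal_ne_zero.2 hi.ne')).trans_le (norm_le_pi_norm wℂ i)
  refine spectrum.ofReal_le_spectralRadius_of_le_norm_pow _ (div_pos hi hwℂ) ht fun k => ?_
  rw [div_mul_eq_mul_div, div_le_iff₀ hwℂ]
  calc w i * t ^ k ≤ ((B ^ k) *ᵥ w) i := by
        rw [mul_comm]; exact pow_smul_le_pow_mulVec hB ht h k i
    _ ≤ ‖((B.map Complex.ofReal ^ k) *ᵥ wℂ) i‖ := by
      have hcast : ((B.map Complex.ofReal ^ k) *ᵥ wℂ) i = ((B ^ k) *ᵥ w) i := by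
        have := (Complex.ofRealHom.map_mulVec (B ^ k) w i).symm
        rwa [Matrix.map_pow] at this
      rw [hcast]
      exact Real.le_norm_self _ |>.trans_eq (Complex.norm_real _).symm
    _ ≤ ‖(B.map Complex.ofReal ^ k) *ᵥ wℂ‖ := norm_le_pi_norm _ i
    _ ≤ ‖B.map Complex.ofReal ^ k‖ * ‖wℂ‖ := linfty_opNorm_mulVec _ _

theorem exists_pos_mem_spectrum_forall_norm_le [DecidableEq n] [Nonempty n] {B : Matrix n n ℝ}
    (hB : ∀ i j, 0 < B i j) :
    ∃ ρ : ℝ, 0 < ρ ∧ ρ ∈ spectrum ℝ B ∧ ∀ μ ∈ spectrum ℂ (B.map Complex.ofReal), ‖μ‖ ≤ ρ := by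
  have : CompleteSpace (Matrix n n ℂ) := FiniteDimensional.complete ℂ _
  obtain ⟨μ₀, hμ₀, hrad⟩ := spectrum.exists_nnnorm_eq_spectralRadius_of_nonempty
    (spectrum.nonempty (B.map Complex.ofReal))
  set ρ := ‖μ₀‖
  have hmax : ∀ μ ∈ spectrum ℂ (B.map Complex.ofReal), ‖μ‖ ≤ ρ := fun μ hμ => by
    have : (‖μ‖₊ : ℝ≥0∞) ≤ ‖μ₀‖₊ := hrad ▸ le_iSup₂ (f := fun k _ => (‖k‖₊ : ℝ≥0∞)) μ hμ
    exact_mod_cast this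
  obtain ⟨v, hv0, hv⟩ := (mem_spectrum_iff_exists_mulVec_eq_smul _ _).1 hμ₀
  set u : n → ℝ := (‖v ·‖)
  have hu : 0 ≤ u := fun i => norm_nonneg _
  have hu0 : u ≠ 0 := fun h => hv0 (funext fun i => norm_eq_zero.1 (congrFun h i))
  have hBu : ρ • u ≤ B *ᵥ u := norm_smul_le_mulVec_norm (fun i j => (hB i j).le) hv
  -- Otherwise `w = B u` satisfies `B w > ρ • w` entrywise, pushing the spectral radius above `ρ`.
  have heig : B *ᵥ u = ρ • u := by
    by_contra hne
    set w := B *ᵥ u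
    have hgap : ∀ i, ρ * w i < (B *ᵥ w) i := fun i => by
      have := mulVec_apply_pos hB (sub_nonneg.2 hBu) (sub_ne_zero.2 hne) i
      rw [mulVec_sub, mulVec_smul] at this
      simpa [sub_pos] using this
    have hw : ∀ i, 0 < w i := mulVec_apply_pos hB hu hu0
    obtain ⟨t, hρt, htw⟩ := exists_gt_smul_le_of_forall_lt hgap
    have := ofReal_le_spectralRadius_of_smul_le_mulVec (fun i j => (hB i j).le)
      (fun i => (hw i).le) (Function.ne_iff.2 ⟨Classical.arbitrary n, (hw _).ne'⟩)
      ((norm_nonneg _).trans hρt.le) htw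
    rw [← hrad] at this
    exact hρt.not_ge (by simpa using this)
  refine ⟨ρ, ?_, (mem_spectrum_iff_exists_mulVec_eq_smul _ _).2 ⟨u, hu0, heig⟩, hmax⟩
  refine (show 0 ≤ ρ from norm_nonneg _).lt_of_ne fun hρ0 => ?_
  have := mulVec_apply_pos hB hu hu0 (Classical.arbitrary n)
  rw [heig, ← hρ0, zero_smul] at this
  exact this.false

end Matrix

theorem stmt_13_general (A : Matrix (Fin 3) (Fin 3) ℝ)
    (hinv : ∀ i j, 0 < A⁻¹ i j) (hdet0 : 0 < A.det) (hdet1 : A.det < 1) :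
    ∃ lam : ℝ, 0 < lam ∧ lam < 1 ∧
      Matrix.det (A - lam • (1 : Matrix (Fin 3) (Fin 3) ℝ)) = 0 ∧
      ∀ μ : ℂ, Matrix.det (A.map (Complex.ofReal) -
          μ • (1 : Matrix (Fin 3) (Fin 3) ℂ)) = 0 → lam ≤ ‖μ‖ := by
  have hdet : IsUnit A.det := hdet0.ne'.isUnit
  have hA : IsUnit A := (isUnit_iff_isUnit_det A).2 hdet
  obtain ⟨ρ, hρ, hρA, hmax⟩ := exists_pos_mem_spectrum_forall_norm_le hinv
  have hinvℂ : (A.map Complex.ofReal)⁻¹ = A⁻¹.map Complex.ofReal :=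
    (map_nonsing_inv Complex.ofRealHom hdet).symm
  have hmin : ∀ μ ∈ spectrum ℂ (A.map Complex.ofReal), ρ⁻¹ ≤ ‖μ‖ := fun μ =>
    inv_le_norm_of_mem_spectrum (hA.map Complex.ofRealHom.mapMatrix) (hinvℂ ▸ hmax)
  have hdetℂ : (A.map Complex.ofReal).det = A.det := (Complex.ofRealHom.map_det A).symm
  have hcube : ρ⁻¹ ^ 3 < 1 :=
    calc ρ⁻¹ ^ 3 ≤ ‖(A.map Complex.ofReal).det‖ := by
          simpa using pow_card_le_norm_det _ (inv_pos.2 hρ).le hmin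
      _ = A.det := by rw [hdetℂ, Complex.norm_real, Real.norm_of_nonneg hdet0.le]
      _ < 1 := hdet1
  refine ⟨ρ⁻¹, inv_pos.2 hρ, (pow_lt_one_iff_of_nonneg (inv_pos.2 hρ).le (by norm_num)).1 hcube,
    (mem_spectrum_iff_det_sub_smul_eq_zero _ _).1 ((inv_mem_spectrum_iff hA).2 hρA),
    fun μ hμ => hmin μ ((mem_spectrum_iff_det_sub_smul_eq_zero _ _).2 hμ)⟩

theorem stmt_13 (A : Matrix (Fin 3) (Fin 3) ℝ) (hA : IsUnit A)
    (hinv : ∀ i j, 0 < A⁻¹ i j) (hdet0 : 0 < A.det) (hdet1 : A.det < 1) :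
    ∃ lam : ℝ, 0 < lam ∧ lam < 1 ∧
      Matrix.det (A - lam • (1 : Matrix (Fin 3) (Fin 3) ℝ)) = 0 ∧
      ∀ μ : ℂ, Matrix.det (A.map (Complex.ofReal) -
          μ • (1 : Matrix (Fin 3) (Fin 3) ℂ)) = 0 → lam ≤ ‖μ‖ :=
  stmt_13_general A hinv hdet0 hdet1
end

section
/- Let b, a, μ > 0, ω > 0, φ ∈ (0, 1), and set c = e^{−μ(1−φ)ω}, K = c·e^{bφω} and r = bφω − μ(1−φ)ω. Define the 1-dimensional Poincaré map P(x) = b·c·x·e^{bφω} / (b + a·c·x·(e^{bφω} − 1)) for x ≥ 0. Then P has a fixed point in (0, ∞) if and only if r > 0, and in that case the fixed point is unique and equals q = b(K − 1)/(a·c·(e^{bφω} − 1)). -/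
/-!
The Poincaré map is the Beverton–Holt map `x ↦ b K x / (b + β x)` with `β = a c (e^{bφω} - 1) > 0`.
Dividing the fixed-point equation by `x ≠ 0` leaves the linear equation `b K = b + β x`, whose only
root is `q = b (K - 1) / β`; it is positive exactly when `K = e^r > 1`, i.e. when `r > 0`.
-/

open Real

theorem mul_div_add_mul_eq_self_iff {𝕜 : Type*} [Field 𝕜] {b k β x : 𝕜} (hx : x ≠ 0)
    (hβ : β ≠ 0) (hD : b + β * x ≠ 0) :
    b * k * x / (b + β * x) = x ↔ x = b * (k - 1) / β := by
  rw [div_eq_iff hD, eq_div_iff hβ]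
  constructor
  · intro h
    have hlin : b * k = b + β * x := mul_right_cancel₀ hx (by linear_combination h)
    linear_combination -hlin
  · intro h
    linear_combination (-x) * h

theorem stmt_16_general (b a μ ω φ : ℝ) (hb : 0 < b) (ha : 0 < a)
    (hω : 0 < ω) (hφ0 : 0 < φ) :
    let c : ℝ := Real.exp (-μ * (1 - φ) * ω)
    let K : ℝ := c * Real.exp (b * φ * ω)
    let r : ℝ := b * φ * ω - μ * (1 - φ) * ω
    let P : ℝ → ℝ := fun x =>
      b * c * x * Real.exp (b * φ * ω) /
        (b + a * c * x * (Real.exp (b * φ * ω) - 1))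
    ((∃ q > (0 : ℝ), P q = q) ↔ 0 < r) ∧
    (0 < r →
      let q : ℝ := b * (K - 1) / (a * c * (Real.exp (b * φ * ω) - 1))
      0 < q ∧ P q = q ∧ ∀ x > (0 : ℝ), P x = x → x = q) := by
  intro c K r P
  set β := a * c * (exp (b * φ * ω) - 1)
  have hβ : 0 < β :=
    mul_pos (mul_pos ha (exp_pos _)) (sub_pos.mpr (one_lt_exp_iff.mpr (by positivity)))
  have hK : K = exp r := by simp only [K, c, r, ← exp_add]; ring_nf
  have hfix : ∀ x > 0, P x = x ↔ x = b * (K - 1) / β := fun x hx => by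
    have hP : P x = b * K * x / (b + β * x) := by simp only [P, K, β]; ring_nf
    rw [hP, mul_div_add_mul_eq_self_iff hx.ne' hβ.ne' (by positivity)]
  have hq : 0 < b * (K - 1) / β ↔ 0 < r := by
    rw [div_pos_iff_of_pos_right hβ, mul_pos_iff_of_pos_left hb, sub_pos, hK, one_lt_exp_iff]
  refine ⟨⟨fun ⟨x, hx, hPx⟩ => hq.mp ((hfix x hx).mp hPx ▸ hx), fun hr => ?_⟩, fun hr => ?_⟩
  · exact ⟨_, hq.mpr hr, (hfix _ (hq.mpr hr)).mpr rfl⟩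
  · exact ⟨hq.mpr hr, (hfix _ (hq.mpr hr)).mpr rfl, fun x hx => (hfix x hx).mp⟩

theorem stmt_16 (b a μ ω φ : ℝ) (hb : 0 < b) (ha : 0 < a) (hμ : 0 < μ)
    (hω : 0 < ω) (hφ0 : 0 < φ) (hφ1 : φ < 1) :
    let c : ℝ := Real.exp (-μ * (1 - φ) * ω)
    let K : ℝ := c * Real.exp (b * φ * ω)
    let r : ℝ := b * φ * ω - μ * (1 - φ) * ω
    let P : ℝ → ℝ := fun x =>
      b * c * x * Real.exp (b * φ * ω) /
        (b + a * c * x * (Real.exp (b * φ * ω) - 1))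
    ((∃ q > (0 : ℝ), P q = q) ↔ 0 < r) ∧
    (0 < r →
      let q : ℝ := b * (K - 1) / (a * c * (Real.exp (b * φ * ω) - 1))
      0 < q ∧ P q = q ∧ ∀ x > (0 : ℝ), P x = x → x = q) :=
  stmt_16_general b a μ ω φ hb ha hω hφ0
end
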